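/- arXiv:2511.03979 — 3 statements merged into one kernel-verified Lean document; each statement's English description precedes it below -/
import Mathlib

section
/- For every integer n > 0, A(n) = C(n+1); that is, the number of partitions of n into distinct parts equals the number of partitions of n+1 whose largest part is even and in which every part not exceeding half of the largest part appears exactly once. -/
/-- `A n`: number of partitions of `n` into distinct parts. -/
noncomputable def A (n : ℕ) : ℕ := Nat.card {p : n.Partition // p.parts.Nodup}

/-- `C n`: number of partitions of `n` whose largest part is even and in which
every part not exceeding half of the largest part appears exactly once. -/
noncomputable def C (n : ℕ) : ℕ := Nat.card {p : n.Partition //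
  Even p.parts.sup ∧ ∀ a ∈ p.parts, 2 * a ≤ p.parts.sup → p.parts.count a = 1}

/-!
By Euler's theorem, `A n` counts the partitions of `n` into odd parts. Splitting every part
`2 ^ a * j` (`j` odd) into `2 ^ a` copies of `j` is a sum-preserving bijection from the multisets
with parts in `[1, S]` in which no part `k` with `2 * k ≤ S` repeats onto the multisets of odd parts
`≤ S`: the inverse adds the odd parts back with binary carries `k + k ↦ 2 * k`, performed exactly
when `2 * k ≤ S`, and uniqueness comes from reading off the binary digits by parity. A partition
counted by `C (n + 1)` is its largest part `S = M + 1` together with such a multiset; splitting the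
multiset and replacing `S` by `M` gives the partitions of `n` into odd parts with largest part `M`.
-/

open Multiset

lemma Multiset.sup_mem_of_ne_zero {α : Type*} [LinearOrder α] [OrderBot α] {s : Multiset α}
    (hs : s ≠ 0) : s.sup ∈ s := by
  obtain ⟨a, ha, hmax⟩ := s.exists_max_image id hs
  rwa [le_antisymm (sup_le.2 hmax) (le_sup ha)]

lemma Multiset.sup_cons_eq_of_forall_le {α : Type*} [SemilatticeSup α] [OrderBot α] {a : α}
    {s : Multiset α} (h : ∀ b ∈ s, b ≤ a) : (a ::ₘ s).sup = a := by
  rw [sup_cons, sup_eq_left.mpr (sup_le.mpr h)]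

def oddSplit (R : Multiset ℕ) : Multiset ℕ :=
  R.bind fun k => replicate (ordProj[2] k) (ordCompl[2] k)

@[simp]
lemma oddSplit_cons (k : ℕ) (R : Multiset ℕ) :
    oddSplit (k ::ₘ R) = replicate (ordProj[2] k) (ordCompl[2] k) + oddSplit R :=
  cons_bind _ _ _

@[simp]
lemma oddSplit_add (R₁ R₂ : Multiset ℕ) : oddSplit (R₁ + R₂) = oddSplit R₁ + oddSplit R₂ :=
  add_bind _ _ _

lemma oddSplit_cons_of_odd {j : ℕ} (hj : Odd j) (R : Multiset ℕ) :
    oddSplit (j ::ₘ R) = j ::ₘ oddSplit R := by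
  have hv : j.factorization 2 = 0 :=
    Nat.factorization_eq_zero_of_not_dvd (Nat.two_dvd_ne_zero.mpr (Nat.odd_iff.mp hj))
  rw [oddSplit_cons, hv, pow_zero, Nat.div_one, replicate_one, singleton_add]

lemma oddSplit_of_forall_odd {O : Multiset ℕ} (hO : ∀ j ∈ O, Odd j) : oddSplit O = O := by
  induction O using Multiset.induction_on with
  | empty => rfl
  | cons j O ih =>
    rw [oddSplit_cons_of_odd (hO j (mem_cons_self j O)),
      ih fun i hi => hO i (mem_cons_of_mem hi)]

lemma oddSplit_cons_two_mul {k : ℕ} (hk : k ≠ 0) (R : Multiset ℕ) :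
    oddSplit (2 * k ::ₘ R) = oddSplit (k ::ₘ k ::ₘ R) := by
  have hproj : ordProj[2] (2 * k) = 2 * ordProj[2] k := by
    rw [Nat.ordProj_mul 2 two_ne_zero hk, Nat.Prime.factorization_self Nat.prime_two, pow_one]
  have hcompl : ordCompl[2] (2 * k) = ordCompl[2] k := by
    rw [Nat.ordCompl_mul, Nat.Prime.factorization_self Nat.prime_two]; simp
  rw [oddSplit_cons, hcompl, hproj, two_mul, replicate_add, oddSplit_cons, oddSplit_cons,
    add_assoc]

lemma oddSplit_map_two_mul {H : Multiset ℕ} (hH : ∀ k ∈ H, k ≠ 0) :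
    oddSplit (H.map (2 * ·)) = oddSplit H + oddSplit H := by
  induction H using Multiset.induction_on with
  | empty => rfl
  | cons k H ih =>
    rw [map_cons, oddSplit_cons_two_mul (hH k (mem_cons_self k H)), oddSplit_cons,
      oddSplit_cons, ih fun i hi => hH i (mem_cons_of_mem hi), oddSplit_cons]
    abel

lemma sum_oddSplit (R : Multiset ℕ) : (oddSplit R).sum = R.sum := by
  induction R using Multiset.induction_on with
  | empty => rfl
  | cons k R ih =>
    rw [oddSplit_cons, sum_add, ih, sum_replicate, smul_eq_mul,
      Nat.ordProj_mul_ordCompl_eq_self, sum_cons]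

lemma forall_mem_oddSplit {S : ℕ} {R : Multiset ℕ} (hR : ∀ k ∈ R, 0 < k ∧ k ≤ S) :
    ∀ j ∈ oddSplit R, Odd j ∧ j ≤ S := by
  simp only [oddSplit, mem_bind, mem_replicate]
  rintro j ⟨k, hk, -, rfl⟩
  obtain ⟨hk0, hkS⟩ := hR k hk
  exact ⟨Nat.odd_iff.mpr (Nat.two_dvd_ne_zero.mp (Nat.not_dvd_ordCompl Nat.prime_two hk0.ne')),
    (Nat.ordCompl_le k 2).trans hkS⟩

def evenHalves (R : Multiset ℕ) : Multiset ℕ := (R.filter Even).map (· / 2)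

lemma filter_odd_add_map_two_mul_evenHalves (R : Multiset ℕ) :
    R.filter Odd + (evenHalves R).map (2 * ·) = R := by
  have hmap : (evenHalves R).map (2 * ·) = R.filter (¬Odd ·) := by
    rw [evenHalves, map_map, filter_congr fun k _ => Nat.not_odd_iff_even]
    conv_rhs => rw [← map_id' (filter Even R)]
    exact map_congr rfl fun k hk => Nat.two_mul_div_two_of_even (of_mem_filter hk)
  rw [hmap, filter_add_not]

/-- No two equal parts of `R` can be merged into a part `≤ S`. -/
def IsCarryFree (S : ℕ) (R : Multiset ℕ) : Prop :=
  (∀ k ∈ R, 0 < k ∧ k ≤ S) ∧ ∀ k, 2 * k ≤ S → R.count k ≤ 1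

namespace IsCarryFree

variable {S : ℕ} {R : Multiset ℕ}

lemma zero (S : ℕ) : IsCarryFree S 0 :=
  ⟨fun _ h => absurd h (notMem_zero _), fun _ _ => by simp⟩

lemma of_le {R' : Multiset ℕ} (hR : IsCarryFree S R) (h : R' ≤ R) : IsCarryFree S R' :=
  ⟨fun k hk => hR.1 k (mem_of_le h hk), fun k hk => (count_le_of_le k h).trans (hR.2 k hk)⟩

lemma cons (hR : IsCarryFree S R) {k : ℕ} (hk0 : 0 < k) (hkS : k ≤ S) (hk : 2 * k ≤ S → k ∉ R) :
    IsCarryFree S (k ::ₘ R) := by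
  refine ⟨fun i hi => ?_, fun i hi => ?_⟩
  · rcases mem_cons.mp hi with rfl | hi
    exacts [⟨hk0, hkS⟩, hR.1 i hi]
  · rw [count_cons]
    split_ifs with hik
    · subst hik
      rw [count_eq_zero.mpr (hk hi)]
    · simpa using hR.2 i hi

lemma sup_cons (hR : IsCarryFree S R) : (S ::ₘ R).sup = S :=
  sup_cons_eq_of_forall_le fun k hk => (hR.1 k hk).2

/-- Adding a part with carries `k + k ↦ 2 * k`, as in binary addition. -/
lemma exists_oddSplit_cons (hR : IsCarryFree S R) {k : ℕ} (hk0 : 0 < k) (hkS : k ≤ S) :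
    ∃ R', IsCarryFree S R' ∧ oddSplit R' = oddSplit (k ::ₘ R) := by
  induction hd : S - k using Nat.strong_induction_on generalizing k R with
  | _ d ih =>
    by_cases hcarry : 2 * k ≤ S ∧ k ∈ R
    · obtain ⟨R', hR', hsplit⟩ :=
        ih (S - 2 * k) (by omega) (hR.of_le (erase_le k R)) (by omega) hcarry.1 rfl
      refine ⟨R', hR', ?_⟩
      rw [hsplit, oddSplit_cons_two_mul hk0.ne', cons_erase hcarry.2]
    · exact ⟨k ::ₘ R, hR.cons hk0 hkS fun h => not_and.mp hcarry h, rfl⟩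

lemma halve (hR : IsCarryFree S R) : IsCarryFree (S / 2) (evenHalves R) := by
  have hle : (evenHalves R).map (2 * ·) ≤ R :=
    (Multiset.le_add_left _ _).trans (filter_odd_add_map_two_mul_evenHalves R).le
  refine ⟨fun k hk => ?_, fun k hk => ?_⟩
  · have := hR.1 (2 * k) (mem_of_le hle (mem_map_of_mem _ hk))
    omega
  · rw [← count_map_eq_count' _ _ (mul_right_injective₀ two_ne_zero)]
    exact (count_le_of_le _ hle).trans (hR.2 _ (by omega))

lemma oddSplit_eq (hR : IsCarryFree S R) :
    oddSplit R = R.filter Odd + (oddSplit (evenHalves R) + oddSplit (evenHalves R)) := by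
  conv_lhs => rw [← filter_odd_add_map_two_mul_evenHalves R]
  rw [oddSplit_add, oddSplit_of_forall_odd fun k hk => of_mem_filter hk,
    oddSplit_map_two_mul fun k hk => (hR.halve.1 k hk).1.ne']

lemma eq_of_oddSplit_eq {R₁ R₂ : Multiset ℕ} (h₁ : IsCarryFree S R₁) (h₂ : IsCarryFree S R₂)
    (h : oddSplit R₁ = oddSplit R₂) : R₁ = R₂ := by
  induction S using Nat.strong_induction_on generalizing R₁ R₂ with
  | _ S ih =>
    rcases Nat.eq_zero_or_pos S with rfl | hS
    · have hzero : ∀ R, IsCarryFree 0 R → R = 0 := fun R hR =>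
        eq_zero_of_forall_notMem fun k hk => by have := hR.1 k hk; omega
      rw [hzero R₁ h₁, hzero R₂ h₂]
    have hcount_zero : ∀ {R'} {j : ℕ}, IsCarryFree (S / 2) R' → (¬Odd j ∨ S < 2 * j) →
        (oddSplit R').count j = 0 := fun hR' hj => count_eq_zero.mpr fun hmem => by
      have := forall_mem_oddSplit hR'.1 _ hmem
      rcases hj with hj | hj
      · exact hj this.1
      · omega
    -- Counting `oddSplit_eq` at an odd `j`, the first summand is `≤ 1` when `2 * j ≤ S` and the
    -- second vanishes otherwise, so both are determined by the left side.
    have hdigits : ∀ j, (R₁.filter Odd).count j = (R₂.filter Odd).count j ∧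
        (oddSplit (evenHalves R₁)).count j = (oddSplit (evenHalves R₂)).count j := by
      intro j
      by_cases hj : Odd j
      · have e₁ := congrArg (count j) h₁.oddSplit_eq
        have e₂ := congrArg (count j) h₂.oddSplit_eq
        simp only [count_add, count_filter_of_pos hj, h] at e₁ e₂ ⊢
        by_cases hjS : 2 * j ≤ S
        · have := h₁.2 j hjS
          have := h₂.2 j hjS
          omega
        · have hS₂ : S < 2 * j := by omega
          simp only [hcount_zero h₁.halve (Or.inr hS₂), hcount_zero h₂.halve (Or.inr hS₂),
            add_zero, and_true] at e₁ e₂ ⊢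
          omega
      · rw [count_filter_of_neg hj, count_filter_of_neg hj, hcount_zero h₁.halve (Or.inl hj),
          hcount_zero h₂.halve (Or.inl hj)]
        exact ⟨rfl, rfl⟩
    have hodd : R₁.filter Odd = R₂.filter Odd := ext.mpr fun j => (hdigits j).1
    have hhalf : evenHalves R₁ = evenHalves R₂ :=
      ih (S / 2) (by omega) h₁.halve h₂.halve (ext.mpr fun j => (hdigits j).2)
    rw [← filter_odd_add_map_two_mul_evenHalves R₁, ← filter_odd_add_map_two_mul_evenHalves R₂,
      hodd, hhalf]

lemma forall_mem_pred_cons_oddSplit (hS : Even S) (hS0 : 0 < S) (hR : IsCarryFree S R) :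
    ∀ j ∈ (S - 1) ::ₘ oddSplit R, Odd j ∧ j ≤ S - 1 := by
  intro j hj
  rcases mem_cons.mp hj with rfl | hj
  · exact ⟨Nat.Even.sub_odd hS0 hS odd_one, le_rfl⟩
  · obtain ⟨hodd, hjS⟩ := forall_mem_oddSplit hR.1 j hj
    refine ⟨hodd, ?_⟩
    obtain ⟨r, rfl⟩ := hS
    obtain ⟨i, rfl⟩ := hodd
    omega

end IsCarryFree

lemma exists_isCarryFree_oddSplit_eq {S : ℕ} {O : Multiset ℕ} (hO : ∀ j ∈ O, Odd j ∧ j ≤ S) :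
    ∃ R, IsCarryFree S R ∧ oddSplit R = O := by
  induction O using Multiset.induction_on with
  | empty => exact ⟨0, IsCarryFree.zero S, rfl⟩
  | cons j O ih =>
    obtain ⟨R, hR, rfl⟩ := ih fun i hi => hO i (mem_cons_of_mem hi)
    obtain ⟨hj, hjS⟩ := hO j (mem_cons_self j _)
    obtain ⟨R', hR', h⟩ := hR.exists_oddSplit_cons hj.pos hjS
    exact ⟨R', hR', h.trans (oddSplit_cons_of_odd hj R)⟩

lemma count_eq_one_iff_isCarryFree_erase_sup {Q : Multiset ℕ} (hQ : ∀ k ∈ Q, 0 < k) :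
    (∀ a ∈ Q, 2 * a ≤ Q.sup → Q.count a = 1) ↔ IsCarryFree Q.sup (Q.erase Q.sup) := by
  refine ⟨fun h => ⟨fun k hk => ?_, fun k hk => ?_⟩, fun h a ha haS => ?_⟩
  · have hk' := mem_of_mem_erase hk
    exact ⟨hQ k hk', le_sup hk'⟩
  · refine (count_le_of_le k (erase_le _ _)).trans ?_
    by_cases hkQ : k ∈ Q
    · rw [h k hkQ hk]
    · rw [count_eq_zero.mpr hkQ]
      exact zero_le_one
  · have hne : a ≠ Q.sup := by have := hQ a ha; omega
    have := h.2 a haS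
    rw [count_erase_of_ne hne] at this
    exact le_antisymm this (one_le_count_iff_mem.mpr ha)

abbrev EvenTopPartition (n : ℕ) : Type :=
  {q : n.Partition // Even q.parts.sup ∧ ∀ a ∈ q.parts, 2 * a ≤ q.parts.sup → q.parts.count a = 1}

abbrev OddPartition (n : ℕ) : Type := {p : n.Partition // ∀ i ∈ p.parts, ¬Even i}

namespace EvenTopPartition

variable {n : ℕ}

lemma sup_mem (q : EvenTopPartition (n + 1)) : q.1.parts.sup ∈ q.1.parts :=
  sup_mem_of_ne_zero fun h => by simpa [h] using q.1.parts_sum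

lemma sup_pos (q : EvenTopPartition (n + 1)) : 0 < q.1.parts.sup :=
  q.1.parts_pos q.sup_mem

lemma isCarryFree (q : EvenTopPartition n) :
    IsCarryFree q.1.parts.sup (q.1.parts.erase q.1.parts.sup) :=
  (count_eq_one_iff_isCarryFree_erase_sup fun _ hk => q.1.parts_pos hk).mp q.2.2

def toOdd (q : EvenTopPartition (n + 1)) : OddPartition n :=
  have hodd := q.isCarryFree.forall_mem_pred_cons_oddSplit q.2.1 q.sup_pos
  ⟨{ parts := (q.1.parts.sup - 1) ::ₘ oddSplit (q.1.parts.erase q.1.parts.sup)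
     parts_pos := fun hi => (hodd _ hi).1.pos
     parts_sum := by
       have := sum_erase q.sup_mem
       have := q.1.parts_sum
       have := q.sup_pos
       rw [sum_cons, sum_oddSplit]
       omega },
    fun i hi => Nat.not_even_iff_odd.mpr (hodd i hi).1⟩

lemma sup_toOdd (q : EvenTopPartition (n + 1)) :
    q.toOdd.1.parts.sup = q.1.parts.sup - 1 :=
  sup_cons_eq_of_forall_le fun j hj => (q.isCarryFree.forall_mem_pred_cons_oddSplit q.2.1
    q.sup_pos j (mem_cons_of_mem hj)).2

lemma toOdd_injective : Function.Injective (toOdd (n := n)) := by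
  intro q₁ q₂ h
  have hS : q₁.1.parts.sup = q₂.1.parts.sup := by
    have := congrArg (fun p : OddPartition n => p.1.parts.sup) h
    simp only [sup_toOdd] at this
    have := q₁.sup_pos
    have := q₂.sup_pos
    omega
  have hsplit := congrArg (fun p : OddPartition n => p.1.parts) h
  have hfree := q₁.isCarryFree
  have hmem := q₁.sup_mem
  simp only [toOdd, hS, cons_inj_right] at hsplit hfree hmem
  apply Subtype.ext
  apply Nat.Partition.ext
  rw [← cons_erase hmem, hfree.eq_of_oddSplit_eq q₂.isCarryFree hsplit, cons_erase q₂.sup_mem]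

lemma toOdd_surjective (hn : 0 < n) : Function.Surjective (toOdd (n := n)) := by
  intro p
  set P := p.1.parts
  have hM : P.sup ∈ P :=
    sup_mem_of_ne_zero fun h => hn.ne' (by rw [← p.1.parts_sum, show p.1.parts = 0 from h, sum_zero])
  obtain ⟨R, hR, hsplit⟩ := exists_isCarryFree_oddSplit_eq (S := P.sup + 1) (O := P.erase P.sup)
    fun j hj => have hj := mem_of_mem_erase hj
      ⟨Nat.not_even_iff_odd.mp (p.2 j hj), (le_sup hj).trans (Nat.le_succ _)⟩
  have hsum : P.sup + 1 + R.sum = n + 1 := by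
    rw [← sum_oddSplit, hsplit, ← p.1.parts_sum, ← sum_erase hM]
    ring
  have hpos : ∀ k ∈ (P.sup + 1) ::ₘ R, 0 < k := by
    intro k hk
    rcases mem_cons.mp hk with rfl | hk
    exacts [Nat.succ_pos _, (hR.1 k hk).1]
  refine ⟨⟨⟨(P.sup + 1) ::ₘ R, hpos _, by rw [sum_cons, hsum]⟩, ?_, ?_⟩, ?_⟩
  · rw [hR.sup_cons]
    exact (Nat.not_even_iff_odd.mp (p.2 _ hM)).add_one
  · rw [count_eq_one_iff_isCarryFree_erase_sup hpos, hR.sup_cons, erase_cons_head]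
    exact hR
  · apply Subtype.ext
    apply Nat.Partition.ext
    simp only [toOdd, hR.sup_cons, erase_cons_head, add_tsub_cancel_right, hsplit]
    exact cons_erase hM

end EvenTopPartition

/-- For every integer `n > 0`, `A n = C (n+1)`. -/
theorem A_eq_C_succ (n : ℕ) (hn : 0 < n) : A n = C (n + 1) := by
  have hA : A n = (Nat.Partition.distincts n).card := by
    rw [A, Nat.card_eq_fintype_card, Fintype.card_subtype]
    rfl
  have hC : C (n + 1) = (Nat.Partition.odds n).card := by
    rw [C, Nat.card_eq_of_bijective _ ⟨EvenTopPartition.toOdd_injective,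
      EvenTopPartition.toOdd_surjective hn⟩, Nat.card_eq_fintype_card, Fintype.card_subtype]
    rfl
  rw [hA, hC, Nat.Partition.card_odds_eq_card_distincts]
end

section
/- For every integer n > 0, B(n) = C(n+1); that is, the number of partitions of n into odd parts equals the number of partitions of n+1 whose largest part is even and in which every part not exceeding half of the largest part appears exactly once. -/
/-!
Glaisher-style bijection. Strip the largest part `2m - 1` from a partition of `n` into odd parts
and add the part `2m`. For an odd `o < 2m`, the chain `o, 2o, 4o, …` has exactly one member
`2 ^ t * o` in `(m, 2m]`. Write the multiplicity `x` of `o` as `x = ∑_{i<t} εᵢ 2 ^ i + 2 ^ t q`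
with binary digits `εᵢ`, and replace the `x` copies of `o` by `εᵢ` copies of `2 ^ i * o` and `q`
copies of `2 ^ t * o`: parts `≤ m` then occur at most once. Splitting each part `2 ^ i * o` back
into `2 ^ i` copies of `o` inverts this, by uniqueness of that expansion.
-/

/-- `B n`: number of partitions of `n` into odd parts. -/
noncomputable def B (n : ℕ) : ℕ := Nat.card {p : n.Partition // ∀ a ∈ p.parts, Odd a}

open Finset

lemma Multiset.exists_eq_cons_of_forall_le {α : Type*} [LinearOrder α] {s : Multiset α}
    (hs : s ≠ 0) : ∃ a t, (∀ b ∈ t, b ≤ a) ∧ s = a ::ₘ t := by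
  obtain ⟨a, ha, hmax⟩ := s.toFinset.exists_max_image id (Multiset.toFinset_nonempty.mpr hs)
  refine ⟨a, s.erase a, fun b hb => hmax b ?_, (Multiset.cons_erase ?_).symm⟩
  · exact Multiset.mem_toFinset.mpr (Multiset.mem_of_mem_erase hb)
  · exact Multiset.mem_toFinset.mp ha

lemma Multiset.sup_cons_of_forall_le {α : Type*} [SemilatticeSup α] [OrderBot α] {a : α}
    {t : Multiset α} (ht : ∀ b ∈ t, b ≤ a) : (a ::ₘ t).sup = a := by
  rw [Multiset.sup_cons, sup_eq_left, Multiset.sup_le]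
  exact ht

lemma Nat.Partition.parts_ne_zero {n : ℕ} (p : n.Partition) (hn : n ≠ 0) : p.parts ≠ 0 :=
  fun h => hn (by rw [← p.parts_sum, h, Multiset.sum_zero])

lemma odd_ordCompl_two {a : ℕ} (ha : a ≠ 0) : Odd (ordCompl[2] a) :=
  Nat.odd_iff.mpr (Nat.two_dvd_ne_zero.mp (Nat.not_dvd_ordCompl Nat.prime_two ha))

lemma ordCompl_two_pow_mul_of_odd {o : ℕ} (i : ℕ) (ho : Odd o) : ordCompl[2] (2 ^ i * o) = o :=
  Nat.ordCompl_pow_mul_of_not_dvd i Nat.prime_two ho.not_two_dvd_nat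

lemma factorization_two_pow_mul_of_odd {o : ℕ} (i : ℕ) (ho : Odd o) :
    (2 ^ i * o).factorization 2 = i := by
  rw [Nat.factorization_mul (by positivity) ho.pos.ne', Nat.Prime.factorization_pow Nat.prime_two,
    Finsupp.add_apply, Nat.factorization_eq_zero_of_not_dvd ho.not_two_dvd_nat]
  simp

lemma two_pow_mul_eq_iff_of_odd {o a i : ℕ} (ho : Odd o) :
    2 ^ i * o = a ↔ ordCompl[2] a = o ∧ a.factorization 2 = i := by
  constructor
  · rintro rfl
    exact ⟨ordCompl_two_pow_mul_of_odd i ho, factorization_two_pow_mul_of_odd i ho⟩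
  · rintro ⟨hoa, hia⟩
    rw [← hoa, ← hia, Nat.ordProj_mul_ordCompl_eq_self]

lemma sum_two_pow_mul_bit_add (x t : ℕ) :
    ∑ i ∈ range t, 2 ^ i * (x / 2 ^ i % 2) + 2 ^ t * (x / 2 ^ t) = x := by
  induction t with
  | zero => simp
  | succ t ih =>
    have hdiv : x / 2 ^ (t + 1) = x / 2 ^ t / 2 := by rw [pow_succ, Nat.div_div_eq_div_mul]
    have hbit := Nat.mod_add_div (x / 2 ^ t) 2
    have htop : 2 ^ t * (x / 2 ^ t % 2) + 2 ^ (t + 1) * (x / 2 ^ t / 2) = 2 ^ t * (x / 2 ^ t) := by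
      rw [pow_succ, Nat.mul_assoc (2 ^ t) 2, ← mul_add, hbit]
    rw [sum_range_succ, hdiv, add_assoc, htop, ih]

lemma binary_expansion_unique {t q : ℕ} {d : ℕ → ℕ} (hd : ∀ i < t, d i ≤ 1) :
    (∀ i < t, (∑ j ∈ range t, 2 ^ j * d j + 2 ^ t * q) / 2 ^ i % 2 = d i) ∧
      (∑ j ∈ range t, 2 ^ j * d j + 2 ^ t * q) / 2 ^ t = q := by
  induction t generalizing d with
  | zero => simp
  | succ t ih =>
    obtain ⟨ih_bits, ih_top⟩ := ih (d := fun i => d (i + 1)) fun i hi => hd (i + 1) (by omega)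
    set y := ∑ j ∈ range t, 2 ^ j * d (j + 1) + 2 ^ t * q
    have hd0 := hd 0 (by omega)
    have hx : ∑ j ∈ range (t + 1), 2 ^ j * d j + 2 ^ (t + 1) * q = d 0 + 2 * y := by
      rw [sum_range_succ', mul_add, mul_sum]
      simp only [pow_succ', pow_zero, one_mul, mul_assoc]
      ring
    have hdiv (i : ℕ) : (d 0 + 2 * y) / 2 ^ (i + 1) = y / 2 ^ i := by
      rw [pow_succ', ← Nat.div_div_eq_div_mul]
      congr 1
      omega
    rw [hx]
    refine ⟨fun i hi => ?_, by rw [hdiv, ih_top]⟩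
    rcases i with _ | i
    · omega
    · rw [hdiv, ih_bits i (by omega)]

lemma exists_two_pow_mul_le_lt_two_mul {o k : ℕ} (ho : 0 < o) (hok : o ≤ k) :
    ∃ t, 2 ^ t * o ≤ k ∧ k < 2 * (2 ^ t * o) := by
  have hq : k / o ≠ 0 := (Nat.div_pos hok ho).ne'
  refine ⟨Nat.log 2 (k / o), ?_, ?_⟩
  · calc 2 ^ Nat.log 2 (k / o) * o ≤ k / o * o :=
          Nat.mul_le_mul_right o (Nat.pow_log_le_self 2 hq)
      _ ≤ k := Nat.div_mul_le_self k o
  · calc k < o * (k / o + 1) := Nat.lt_mul_div_succ k ho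
      _ ≤ o * 2 ^ (Nat.log 2 (k / o) + 1) :=
        Nat.mul_le_mul_left o (Nat.lt_pow_succ_log_self (by norm_num) _)
      _ = 2 * (2 ^ Nat.log 2 (k / o) * o) := by ring

section Chain

variable {o k t : ℕ} (hle : 2 ^ t * o ≤ k) (hlt : k < 2 * (2 ^ t * o))
include hle hlt

lemma two_pow_mul_le_iff (i : ℕ) : 2 ^ i * o ≤ k ↔ i ≤ t := by
  constructor
  · intro hi
    by_contra! hti
    have : 2 * (2 ^ t * o) ≤ 2 ^ i * o :=
      calc 2 * (2 ^ t * o) = 2 ^ (t + 1) * o := by ring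
        _ ≤ 2 ^ i * o := Nat.mul_le_mul_right o (Nat.pow_le_pow_right two_pos hti)
    omega
  · intro hi
    exact (Nat.mul_le_mul_right o (Nat.pow_le_pow_right two_pos hi)).trans hle

lemma two_mul_two_pow_mul_le_iff (i : ℕ) : 2 * (2 ^ i * o) ≤ k ↔ i < t := by
  rw [show 2 * (2 ^ i * o) = 2 ^ (i + 1) * o by ring, two_pow_mul_le_iff hle hlt]
  omega

end Chain

def splitOdd (M : Multiset ℕ) : Multiset ℕ :=
  M.bind fun a => Multiset.replicate (ordProj[2] a) (ordCompl[2] a)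

lemma splitOdd_cons (a : ℕ) (M : Multiset ℕ) :
    splitOdd (a ::ₘ M) = Multiset.replicate (ordProj[2] a) (ordCompl[2] a) + splitOdd M :=
  Multiset.cons_bind _ _ _

lemma sum_splitOdd (M : Multiset ℕ) : (splitOdd M).sum = M.sum := by
  induction M using Multiset.induction_on with
  | empty => simp [splitOdd]
  | cons a M ih =>
    rw [splitOdd_cons, Multiset.sum_add, ih, Multiset.sum_cons, Multiset.sum_replicate,
      smul_eq_mul, Nat.ordProj_mul_ordCompl_eq_self]

lemma exists_ordCompl_eq_of_mem_splitOdd {M : Multiset ℕ} {b : ℕ} (hb : b ∈ splitOdd M) :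
    ∃ a ∈ M, ordCompl[2] a = b := by
  obtain ⟨a, ha, hb⟩ := Multiset.mem_bind.mp hb
  exact ⟨a, ha, (Multiset.eq_of_mem_replicate hb).symm⟩

lemma count_splitOdd {o N : ℕ} {M : Multiset ℕ} (ho : Odd o) (hM : ∀ a ∈ M, a < 2 ^ N * o) :
    (splitOdd M).count o = ∑ i ∈ range N, 2 ^ i * M.count (2 ^ i * o) := by
  induction M using Multiset.induction_on with
  | empty => simp [splitOdd]
  | cons a M ih =>
    rw [splitOdd_cons, Multiset.count_add, Multiset.count_replicate,
      ih fun b hb => hM b (Multiset.mem_cons_of_mem hb)]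
    simp only [Multiset.count_cons, mul_add, sum_add_distrib, two_pow_mul_eq_iff_of_odd ho]
    by_cases h : ordCompl[2] a = o
    · have hv : a.factorization 2 < N := by
        have ha := hM a (Multiset.mem_cons_self a M)
        rw [← (two_pow_mul_eq_iff_of_odd ho).mpr ⟨h, rfl⟩] at ha
        exact (Nat.pow_lt_pow_iff_right (by norm_num)).mp (Nat.lt_of_mul_lt_mul_right ha)
      simp [h, hv, add_comm]
    · simp [h]

-- A part `s = 2 ^ v * o` with `2 * s > k` is the top of its chain and takes the whole quotient.
def mergeCount (k : ℕ) (ν : Multiset ℕ) (s : ℕ) : ℕ :=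
  if 2 * s ≤ k then ν.count (ordCompl[2] s) / ordProj[2] s % 2
  else ν.count (ordCompl[2] s) / ordProj[2] s

def mergeOdd (k : ℕ) (ν : Multiset ℕ) : Multiset ℕ :=
  ∑ s ∈ Icc 1 k, Multiset.replicate (mergeCount k ν s) s

lemma count_mergeOdd (k : ℕ) (ν : Multiset ℕ) (s : ℕ) :
    (mergeOdd k ν).count s = if s ∈ Icc 1 k then mergeCount k ν s else 0 := by
  simp only [mergeOdd, Multiset.count_sum', Multiset.count_replicate, Finset.sum_ite_eq']

lemma mem_Icc_of_mem_mergeOdd {k s : ℕ} {ν : Multiset ℕ} (hs : s ∈ mergeOdd k ν) :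
    s ∈ Icc 1 k := by
  by_contra h
  rw [← Multiset.count_pos, count_mergeOdd, if_neg h] at hs
  exact lt_irrefl 0 hs

lemma count_mergeOdd_le_one {k s : ℕ} (ν : Multiset ℕ) (hs : 2 * s ≤ k) :
    (mergeOdd k ν).count s ≤ 1 := by
  rw [count_mergeOdd, mergeCount, if_pos hs]
  split_ifs <;> omega

lemma count_mergeOdd_two_pow_mul {k o i : ℕ} (ν : Multiset ℕ) (ho : Odd o)
    (hi : 2 ^ i * o ≤ k) :
    (mergeOdd k ν).count (2 ^ i * o) =
      if 2 * (2 ^ i * o) ≤ k then ν.count o / 2 ^ i % 2 else ν.count o / 2 ^ i := by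
  have hpos : 1 ≤ 2 ^ i * o := Nat.mul_pos (by positivity) ho.pos
  rw [count_mergeOdd, if_pos (mem_Icc.mpr ⟨hpos, hi⟩), mergeCount,
    ordCompl_two_pow_mul_of_odd i ho, factorization_two_pow_mul_of_odd i ho]

theorem splitOdd_mergeOdd {k : ℕ} {ν : Multiset ℕ} (hν : ∀ a ∈ ν, Odd a ∧ a ≤ k) :
    splitOdd (mergeOdd k ν) = ν := by
  ext o
  by_cases ho : Odd o ∧ o ≤ k
  · obtain ⟨t, hle, hlt⟩ := exists_two_pow_mul_le_lt_two_mul ho.1.pos ho.2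
    have hbound : ∀ a ∈ mergeOdd k ν, a < 2 ^ (t + 1) * o := fun a ha => by
      have := (mem_Icc.mp (mem_Icc_of_mem_mergeOdd ha)).2
      rw [pow_succ', mul_assoc]; omega
    have hlow : ∀ i ∈ range t, 2 ^ i * (mergeOdd k ν).count (2 ^ i * o) =
        2 ^ i * (ν.count o / 2 ^ i % 2) := fun i hi => by
      have hit := mem_range.mp hi
      rw [count_mergeOdd_two_pow_mul ν ho.1 ((two_pow_mul_le_iff hle hlt i).mpr hit.le),
        if_pos ((two_mul_two_pow_mul_le_iff hle hlt i).mpr hit)]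
    rw [count_splitOdd ho.1 hbound, sum_range_succ, sum_congr rfl hlow,
      count_mergeOdd_two_pow_mul ν ho.1 hle, if_neg (by omega), sum_two_pow_mul_bit_add]
  · have hsplit : o ∉ splitOdd (mergeOdd k ν) := fun h => by
      obtain ⟨a, ha, rfl⟩ := exists_ordCompl_eq_of_mem_splitOdd h
      have := mem_Icc.mp (mem_Icc_of_mem_mergeOdd ha)
      exact ho ⟨odd_ordCompl_two (by omega), (Nat.ordCompl_le a 2).trans this.2⟩
    rw [Multiset.count_eq_zero.mpr hsplit, Multiset.count_eq_zero.mpr fun h => ho (hν o h)]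

theorem mergeOdd_splitOdd {k : ℕ} {M : Multiset ℕ} (hM : ∀ a ∈ M, 0 < a ∧ a ≤ k)
    (hdistinct : ∀ a, 2 * a ≤ k → M.count a ≤ 1) : mergeOdd k (splitOdd M) = M := by
  ext s
  rw [count_mergeOdd]
  split_ifs with hs
  · obtain ⟨hs1, hsk⟩ := mem_Icc.mp hs
    set o := ordCompl[2] s
    set v := s.factorization 2
    have ho : Odd o := odd_ordCompl_two (by omega)
    have hs_eq : 2 ^ v * o = s := Nat.ordProj_mul_ordCompl_eq_self s 2
    obtain ⟨t, hle, hlt⟩ :=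
      exists_two_pow_mul_le_lt_two_mul ho.pos ((Nat.ordCompl_le s 2).trans hsk)
    have hbound : ∀ a ∈ M, a < 2 ^ (t + 1) * o := fun a ha => by
      have := (hM a ha).2
      rw [pow_succ', mul_assoc]; omega
    obtain ⟨hbits, htop⟩ := binary_expansion_unique (t := t) (q := M.count (2 ^ t * o))
      (d := fun j => M.count (2 ^ j * o))
      fun j hj => hdistinct _ ((two_mul_two_pow_mul_le_iff hle hlt j).mpr hj)
    have hv : v ≤ t := (two_pow_mul_le_iff hle hlt v).mp (hs_eq ▸ hsk)
    rw [mergeCount, count_splitOdd ho hbound, sum_range_succ]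
    split_ifs with h2s
    · rw [hbits v ((two_mul_two_pow_mul_le_iff hle hlt v).mp (hs_eq ▸ h2s)), hs_eq]
    · have hvt : v = t := by
        have := (two_mul_two_pow_mul_le_iff hle hlt v).not.mp (hs_eq ▸ h2s); omega
      rw [← hvt] at htop ⊢
      rw [htop, hs_eq]
  · exact (Multiset.count_eq_zero.mpr fun h => hs (mem_Icc.mpr (hM s h))).symm

def toCParts (s : Multiset ℕ) : Multiset ℕ :=
  (s.sup + 1) ::ₘ mergeOdd (s.sup + 1) (s.erase s.sup)

def toOddParts (s : Multiset ℕ) : Multiset ℕ :=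
  (s.sup - 1) ::ₘ splitOdd (s.erase s.sup)

lemma toCParts_cons {a : ℕ} {t : Multiset ℕ} (ht : ∀ b ∈ t, b ≤ a) :
    toCParts (a ::ₘ t) = (a + 1) ::ₘ mergeOdd (a + 1) t := by
  rw [toCParts, Multiset.sup_cons_of_forall_le ht, Multiset.erase_cons_head]

lemma toOddParts_cons {a : ℕ} {t : Multiset ℕ} (ht : ∀ b ∈ t, b ≤ a) :
    toOddParts (a ::ₘ t) = (a - 1) ::ₘ splitOdd t := by
  rw [toOddParts, Multiset.sup_cons_of_forall_le ht, Multiset.erase_cons_head]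

lemma sup_toCParts (s : Multiset ℕ) : (toCParts s).sup = s.sup + 1 :=
  Multiset.sup_cons_of_forall_le fun _ hb => (mem_Icc.mp (mem_Icc_of_mem_mergeOdd hb)).2

lemma pos_of_mem_toCParts {s : Multiset ℕ} {b : ℕ} (hb : b ∈ toCParts s) : 0 < b := by
  rcases Multiset.mem_cons.mp hb with rfl | hb
  · omega
  · exact (mem_Icc.mp (mem_Icc_of_mem_mergeOdd hb)).1

lemma count_toCParts_eq_one (s : Multiset ℕ) :
    ∀ b ∈ toCParts s, 2 * b ≤ (toCParts s).sup → (toCParts s).count b = 1 := by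
  intro b hb h2b
  rw [sup_toCParts] at h2b
  have hpos := pos_of_mem_toCParts hb
  rw [toCParts, Multiset.mem_cons] at hb
  rcases hb with rfl | hb
  · omega
  rw [toCParts, Multiset.count_cons_of_ne (by omega)]
  exact le_antisymm (count_mergeOdd_le_one _ h2b) (Multiset.one_le_count_iff_mem.mpr hb)

lemma splitOdd_mergeOdd_of_cons {a : ℕ} {t : Multiset ℕ} (ht : ∀ b ∈ t, b ≤ a)
    (hodd : ∀ b ∈ a ::ₘ t, Odd b) : splitOdd (mergeOdd (a + 1) t) = t :=
  splitOdd_mergeOdd fun b hb =>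
    ⟨hodd b (Multiset.mem_cons_of_mem hb), (ht b hb).trans a.le_succ⟩

section OddParts

variable {s : Multiset ℕ} (hs0 : s ≠ 0) (hodd : ∀ a ∈ s, Odd a)
include hs0 hodd

lemma even_sup_toCParts : Even (toCParts s).sup := by
  obtain ⟨a, t, ht, rfl⟩ := Multiset.exists_eq_cons_of_forall_le hs0
  rw [sup_toCParts, Multiset.sup_cons_of_forall_le ht]
  exact (hodd a (Multiset.mem_cons_self a t)).add_one

lemma sum_toCParts : (toCParts s).sum = s.sum + 1 := by
  obtain ⟨a, t, ht, rfl⟩ := Multiset.exists_eq_cons_of_forall_le hs0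
  rw [toCParts_cons ht, Multiset.sum_cons, Multiset.sum_cons, ← sum_splitOdd,
    splitOdd_mergeOdd_of_cons ht hodd]
  ring

lemma toOddParts_toCParts : toOddParts (toCParts s) = s := by
  obtain ⟨a, t, ht, rfl⟩ := Multiset.exists_eq_cons_of_forall_le hs0
  rw [toCParts_cons ht,
    toOddParts_cons fun b hb => (mem_Icc.mp (mem_Icc_of_mem_mergeOdd hb)).2, Nat.add_sub_cancel,
    splitOdd_mergeOdd_of_cons ht hodd]

end OddParts

lemma mergeOdd_splitOdd_of_cons {k : ℕ} {t : Multiset ℕ} (ht : ∀ b ∈ t, b ≤ k)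
    (hpos : ∀ b ∈ k ::ₘ t, 0 < b)
    (hcount : ∀ b ∈ k ::ₘ t, 2 * b ≤ k → (k ::ₘ t).count b = 1) :
    mergeOdd k (splitOdd t) = t := by
  refine mergeOdd_splitOdd (fun b hb => ⟨hpos b (Multiset.mem_cons_of_mem hb), ht b hb⟩)
    fun b h2b => ?_
  by_cases hb : b ∈ t
  · exact hcount b (Multiset.mem_cons_of_mem hb) h2b ▸ Multiset.count_le_count_cons b k t
  · rw [Multiset.count_eq_zero.mpr hb]
    exact zero_le_one

lemma odd_of_mem_splitOdd {t : Multiset ℕ} (hpos : ∀ b ∈ t, 0 < b) {b : ℕ}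
    (hb : b ∈ splitOdd t) : Odd b := by
  obtain ⟨a, ha, rfl⟩ := exists_ordCompl_eq_of_mem_splitOdd hb
  exact odd_ordCompl_two (hpos a ha).ne'

section CParts

variable {s : Multiset ℕ} (hs0 : s ≠ 0) (hpos : ∀ a ∈ s, 0 < a)
include hs0 hpos

lemma sum_toOddParts : (toOddParts s).sum + 1 = s.sum := by
  obtain ⟨k, t, ht, rfl⟩ := Multiset.exists_eq_cons_of_forall_le hs0
  have hk := hpos k (Multiset.mem_cons_self k t)
  rw [toOddParts_cons ht, Multiset.sum_cons, Multiset.sum_cons, sum_splitOdd]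
  omega

variable (heven : Even s.sup)
include heven

lemma odd_of_mem_toOddParts {b : ℕ} (hb : b ∈ toOddParts s) : Odd b := by
  obtain ⟨k, t, ht, rfl⟩ := Multiset.exists_eq_cons_of_forall_le hs0
  rw [Multiset.sup_cons_of_forall_le ht] at heven
  have hk := hpos k (Multiset.mem_cons_self k t)
  rw [toOddParts_cons ht, Multiset.mem_cons] at hb
  rcases hb with rfl | hb
  · exact Nat.Even.sub_odd hk heven odd_one
  · exact odd_of_mem_splitOdd (fun b hb => hpos b (Multiset.mem_cons_of_mem hb)) hb

lemma toCParts_toOddParts (hcount : ∀ a ∈ s, 2 * a ≤ s.sup → s.count a = 1) :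
    toCParts (toOddParts s) = s := by
  obtain ⟨k, t, ht, rfl⟩ := Multiset.exists_eq_cons_of_forall_le hs0
  rw [Multiset.sup_cons_of_forall_le ht] at heven hcount
  have hk := hpos k (Multiset.mem_cons_self k t)
  have hsplit : ∀ b ∈ splitOdd t, b ≤ k - 1 := fun b hb => by
    have hbodd := odd_of_mem_splitOdd (fun b hb => hpos b (Multiset.mem_cons_of_mem hb)) hb
    obtain ⟨a, ha, rfl⟩ := exists_ordCompl_eq_of_mem_splitOdd hb
    have := (Nat.ordCompl_le a 2).trans (ht a ha)
    rcases this.lt_or_eq with h | h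
    · omega
    · exact absurd heven (h ▸ Nat.not_even_iff_odd.mpr hbodd)
  rw [toOddParts_cons ht, toCParts_cons hsplit, Nat.sub_add_cancel hk,
    mergeOdd_splitOdd_of_cons ht hpos hcount]

end CParts

def oddPartitionEquiv {n : ℕ} (hn : 0 < n) :
    {p : n.Partition // ∀ a ∈ p.parts, Odd a} ≃
      {p : (n + 1).Partition //
        Even p.parts.sup ∧ ∀ a ∈ p.parts, 2 * a ≤ p.parts.sup → p.parts.count a = 1} where
  toFun p :=
    have hs0 := p.1.parts_ne_zero hn.ne'
    ⟨⟨toCParts p.1.parts, pos_of_mem_toCParts, by rw [sum_toCParts hs0 p.2, p.1.parts_sum]⟩,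
      even_sup_toCParts hs0 p.2, count_toCParts_eq_one p.1.parts⟩
  invFun q :=
    have hs0 := q.1.parts_ne_zero n.succ_ne_zero
    have hpos : ∀ a ∈ q.1.parts, 0 < a := fun _ => q.1.parts_pos
    have hodd : ∀ b ∈ toOddParts q.1.parts, Odd b :=
      fun _ => odd_of_mem_toOddParts hs0 hpos q.2.1
    ⟨⟨toOddParts q.1.parts, fun hb => (hodd _ hb).pos,
      by have := sum_toOddParts hs0 hpos; rw [q.1.parts_sum] at this; omega⟩, hodd⟩
  left_inv p := Subtype.ext <| Nat.Partition.ext <|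
    toOddParts_toCParts (p.1.parts_ne_zero hn.ne') p.2
  right_inv q := Subtype.ext <| Nat.Partition.ext <|
    toCParts_toOddParts (q.1.parts_ne_zero n.succ_ne_zero) (fun _ => q.1.parts_pos) q.2.1 q.2.2

/-- For every integer `n > 0`, `B n = C (n+1)`. -/
theorem B_eq_C_succ (n : ℕ) (hn : 0 < n) : B n = C (n + 1) :=
  Nat.card_congr (oddPartitionEquiv hn)
end

section
/- For every integer n > 0, 2·A(n) = D(n+1); that is, twice the number of partitions of n into distinct parts equals the number of partitions of n+1 in which every part appears exactly once except possibly the smallest part, which may appear at most twice. -/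
/-- `D n`: number of partitions of `n` in which every part appears exactly once,
except possibly the smallest part, which may appear once or twice. -/
noncomputable def D (n : ℕ) : ℕ := Nat.card {p : n.Partition //
  ∀ a ∈ p.parts, p.parts.count a = 1 ∨
    (p.parts.count a = 2 ∧ ∀ b ∈ p.parts, a ≤ b)}

/-!
A partition of `n + 1` counted by `D` either has a part `1`, which occurs at most twice, or none.
In the first case deleting one part `1` leaves a partition of `n` into distinct parts; in the
second, lowering one copy of the smallest part `s ≥ 2` to `s - 1` does, because every other part
is `≥ s`. Both operations are invertible (add a part `1`; raise the smallest part by one), so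
each kind of partition of `n + 1` is counted by `A n`.
-/

theorem Nat.card_eq_card_and_add_card_and_not {α : Type*} [Finite α] (p q : α → Prop) :
    Nat.card {a // p a} = Nat.card {a // p a ∧ q a} + Nat.card {a // p a ∧ ¬q a} := by
  classical
  rw [← Nat.card_congr (Equiv.sumCompl fun x : {a // p a} ↦ q x), Nat.card_sum,
    Nat.card_congr (Equiv.subtypeSubtypeEquivSubtypeInter p q),
    Nat.card_congr (Equiv.subtypeSubtypeEquivSubtypeInter p fun a ↦ ¬q a)]

namespace Multiset

section NodupExceptMinTwice

variable {α : Type*} [PartialOrder α] [DecidableEq α]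

def NodupExceptMinTwice (m : Multiset α) : Prop :=
  ∀ a ∈ m, m.count a = 1 ∨ (m.count a = 2 ∧ ∀ b ∈ m, a ≤ b)

theorem nodupExceptMinTwice_cons_iff {a : α} {t : Multiset α} (ha : ∀ b ∈ t, a ≤ b) :
    (a ::ₘ t).NodupExceptMinTwice ↔ t.Nodup := by
  constructor
  · intro h
    refine nodup_iff_count_le_one.2 fun x ↦ ?_
    by_cases hx : x ∈ t
    · have hcount := h x (mem_cons_of_mem hx)
      rw [count_cons] at hcount
      split_ifs at hcount with hxa
      · omega
      · rcases hcount with h1 | ⟨_, hle⟩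
        · omega
        · exact absurd (le_antisymm (hle a (mem_cons_self a t)) (ha x hx)) hxa
    · simp [count_eq_zero_of_notMem hx]
  · intro ht x hx
    rw [count_cons]
    split_ifs with hxa
    · subst hxa
      rcases Nat.le_one_iff_eq_zero_or_eq_one.1 (nodup_iff_count_le_one.1 ht x) with h0 | h1
      · left; omega
      · refine .inr ⟨by omega, fun b hb ↦ ?_⟩
        rcases mem_cons.1 hb with rfl | hb
        exacts [le_rfl, ha b hb]
    · exact .inl (by simpa using count_eq_one_of_mem ht ((mem_cons.1 hx).resolve_left hxa))

end NodupExceptMinTwice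

section NatMin

/-- Junk value `0` on the empty multiset. -/
noncomputable def natMin (m : Multiset ℕ) : ℕ := sInf {a | a ∈ m}

variable {m t : Multiset ℕ} {a b : ℕ}

theorem natMin_mem (hm : m ≠ 0) : m.natMin ∈ m := Nat.sInf_mem (exists_mem_of_ne_zero hm)

theorem natMin_le (ha : a ∈ m) : m.natMin ≤ a := Nat.sInf_le ha

theorem natMin_cons (ha : ∀ b ∈ t, a ≤ b) : (a ::ₘ t).natMin = a := by
  refine le_antisymm (natMin_le (mem_cons_self a t)) ?_
  rcases mem_cons.1 (natMin_mem (cons_ne_zero (a := a) (m := t))) with h | h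
  exacts [h.ge, ha _ h]

theorem Nodup.natMin_lt_of_mem_erase (hm : m.Nodup) (hb : b ∈ m.erase m.natMin) :
    m.natMin < b := by
  rw [hm.mem_erase_iff] at hb
  exact lt_of_le_of_ne (natMin_le hb.2) (Ne.symm hb.1)

theorem nodupExceptMinTwice_iff_nodup_erase_natMin (hm : m ≠ 0) :
    m.NodupExceptMinTwice ↔ (m.erase m.natMin).Nodup := by
  rw [← nodupExceptMinTwice_cons_iff fun b hb ↦ natMin_le (mem_of_mem_erase hb),
    cons_erase (natMin_mem hm)]

end NatMin

end Multiset

open Multiset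

namespace Nat.Partition

variable {n : ℕ}

theorem parts_ne_zero_s2 (hn : n ≠ 0) (p : n.Partition) : p.parts ≠ 0 := fun h ↦
  hn (by simpa [h] using p.parts_sum.symm)

theorem natMin_mem_parts (hn : n ≠ 0) (p : n.Partition) : p.parts.natMin ∈ p.parts :=
  natMin_mem (p.parts_ne_zero_s2 hn)

theorem two_le_natMin_parts {q : (n + 1).Partition} (hq : 1 ∉ q.parts) : 2 ≤ q.parts.natMin := by
  have hmin := natMin_mem_parts n.succ_ne_zero q
  have := q.parts_pos hmin
  have : q.parts.natMin ≠ 1 := fun h ↦ hq (h ▸ hmin :)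
  omega

noncomputable def succMinPart (hn : n ≠ 0) (p : n.Partition) : (n + 1).Partition where
  parts := (p.parts.natMin + 1) ::ₘ p.parts.erase p.parts.natMin
  parts_pos hi := by
    rcases mem_cons.1 hi with rfl | hi
    exacts [Nat.succ_pos _, p.parts_pos (mem_of_mem_erase hi)]
  parts_sum := by
    have := sum_erase (natMin_mem_parts hn p)
    have := p.parts_sum
    rw [sum_cons]
    omega

noncomputable def predMinPart (q : (n + 1).Partition) (hq : 1 ∉ q.parts) : n.Partition where
  parts := (q.parts.natMin - 1) ::ₘ q.parts.erase q.parts.natMin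
  parts_pos hi := by
    rcases mem_cons.1 hi with rfl | hi
    exacts [by have := two_le_natMin_parts hq; omega, q.parts_pos (mem_of_mem_erase hi)]
  parts_sum := by
    have := sum_erase (natMin_mem_parts n.succ_ne_zero q)
    have := two_le_natMin_parts hq
    have := q.parts_sum
    rw [sum_cons]
    omega

section SuccMinPart

variable {p : n.Partition}

theorem natMin_parts_succMinPart (hn : n ≠ 0) (hp : p.parts.Nodup) :
    (succMinPart hn p).parts.natMin = p.parts.natMin + 1 :=
  natMin_cons fun _ hb ↦ hp.natMin_lt_of_mem_erase hb

theorem one_notMem_succMinPart (hn : n ≠ 0) (hp : p.parts.Nodup) :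
    1 ∉ (succMinPart hn p).parts := fun h ↦ by
  have hle := natMin_le h
  rw [natMin_parts_succMinPart hn hp] at hle
  have := p.parts_pos (natMin_mem_parts hn p)
  omega

theorem nodupExceptMinTwice_succMinPart (hn : n ≠ 0) (hp : p.parts.Nodup) :
    (succMinPart hn p).parts.NodupExceptMinTwice :=
  (nodupExceptMinTwice_cons_iff fun _ hb ↦ hp.natMin_lt_of_mem_erase hb).2 (hp.erase _)

theorem predMinPart_succMinPart (hn : n ≠ 0) (hp : p.parts.Nodup) :
    predMinPart (succMinPart hn p) (one_notMem_succMinPart hn hp) = p := by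
  ext1
  change ((succMinPart hn p).parts.natMin - 1) ::ₘ _ = _
  rw [natMin_parts_succMinPart hn hp, Nat.add_sub_cancel, succMinPart, erase_cons_head,
    cons_erase (natMin_mem_parts hn p)]

end SuccMinPart

section PredMinPart

variable {q : (n + 1).Partition}

theorem natMin_parts_predMinPart (hq : 1 ∉ q.parts) :
    (predMinPart q hq).parts.natMin = q.parts.natMin - 1 :=
  natMin_cons fun _ hb ↦ (natMin_le (mem_of_mem_erase hb)).trans' (Nat.sub_le _ _)

theorem nodup_predMinPart (hq : 1 ∉ q.parts) (hD : q.parts.NodupExceptMinTwice) :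
    (predMinPart q hq).parts.Nodup := by
  refine nodup_cons.2 ⟨fun h ↦ ?_, (nodupExceptMinTwice_iff_nodup_erase_natMin
    (q.parts_ne_zero_s2 n.succ_ne_zero)).1 hD⟩
  have := natMin_le (mem_of_mem_erase h)
  have := two_le_natMin_parts hq
  omega

theorem succMinPart_predMinPart (hn : n ≠ 0) (hq : 1 ∉ q.parts) :
    succMinPart hn (predMinPart q hq) = q := by
  ext1
  change ((predMinPart q hq).parts.natMin + 1) ::ₘ _ = _
  have := two_le_natMin_parts hq
  rw [natMin_parts_predMinPart hq, Nat.sub_add_cancel (by omega), predMinPart, erase_cons_head,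
    cons_erase (natMin_mem_parts n.succ_ne_zero q)]

end PredMinPart

-- `partitionWithPartEquiv` lands in `(n + 1 - 1).Partition`, which is definitionally `n.Partition`.
def nodupEquivConsOne :
    {p : n.Partition // p.parts.Nodup} ≃
      {q : (n + 1).Partition // q.parts.NodupExceptMinTwice ∧ 1 ∈ q.parts} :=
  ((partitionWithPartEquiv le_rfl (Nat.le_add_left 1 n)).symm.subtypeEquiv fun p ↦ by
      rw [partitionWithPartEquiv_symm_apply_parts,
        nodupExceptMinTwice_cons_iff fun _ hb ↦ p.parts_pos hb]).trans <|
    (Equiv.subtypeSubtypeEquivSubtypeInter _ _).trans <| Equiv.subtypeEquivRight fun _ ↦ and_comm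

noncomputable def nodupEquivSuccMinPart (hn : n ≠ 0) :
    {p : n.Partition // p.parts.Nodup} ≃
      {q : (n + 1).Partition // q.parts.NodupExceptMinTwice ∧ 1 ∉ q.parts} where
  toFun p := ⟨succMinPart hn p, nodupExceptMinTwice_succMinPart hn p.2,
    one_notMem_succMinPart hn p.2⟩
  invFun q := ⟨predMinPart q q.2.2, nodup_predMinPart q.2.2 q.2.1⟩
  left_inv p := Subtype.ext (predMinPart_succMinPart hn p.2)
  right_inv q := Subtype.ext (succMinPart_predMinPart hn q.2.2)

end Nat.Partition

/-- For every integer `n > 0`, `2 * A n = D (n+1)`. -/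
theorem two_A_eq_D_succ (n : ℕ) (hn : 0 < n) : 2 * A n = D (n + 1) := by
  change _ = Nat.card {q : (n + 1).Partition // q.parts.NodupExceptMinTwice}
  rw [Nat.card_eq_card_and_add_card_and_not _ (1 ∈ ·.parts), two_mul]
  exact congr_arg₂ (· + ·) (Nat.card_congr Nat.Partition.nodupEquivConsOne)
    (Nat.card_congr (Nat.Partition.nodupEquivSuccMinPart hn.ne'))
end
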